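/- For every real number λ with λ > 1, one has (10/7)·(λ²−λ+1)·F(8/3, 1/3, 10/3; 1/λ) − (1/6)·(λ+1)·(8λ²−11λ+8)·F(5/3, 1/3, 7/3; 1/λ) + λ·(1−λ)²·F(2/3, 1/3, 4/3; 1/λ) = −(1/3)·(λ−1)^{1/3}·λ^{5/3}·(λ+1). -/

import Mathlib

open scoped BigOperators

/-- The Gauss hypergeometric series `F(a,b,c;z)`. -/
noncomputable def hypF (a b c z : ℝ) : ℝ :=
  ∑' n : ℕ,
    (Polynomial.eval a (ascPochhammer ℝ n) * Polynomial.eval b (ascPochhammer ℝ n) /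
      (Polynomial.eval c (ascPochhammer ℝ n) * (n.factorial : ℝ))) * z ^ n

/-!
Put `z = 1/λ` and `Fₖ = F(k - 1/3, 1/3, k + 1/3; z)`. After multiplication by `z³` the claim becomes
the power series identity
`(10/7)(z - z² + z³) F₃ - (1/6)(8 - 3z - 3z² + 8z³) F₂ + (1 - z)² F₁ = -(1/3)(1 - z²)(1 - z)^(-2/3)`
on `|z| < 1`, whose right side is a binomial series. All four coefficient sequences are rational
multiples (in `n`) of the coefficients `uₙ` of `F₁`, and `uₙ₊₁ / uₙ` is rational in
`n`, so comparing coefficients of `zⁿ` reduces to a rational function identity in `n` for `n ≥ 3`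
and three numerical checks.
-/

noncomputable def hypCoeff (a b c : ℝ) (n : ℕ) : ℝ :=
  (ascPochhammer ℝ n).eval a * (ascPochhammer ℝ n).eval b /
    ((ascPochhammer ℝ n).eval c * n.factorial)

theorem hypCoeff_zero (a b c : ℝ) : hypCoeff a b c 0 = 1 := by
  simp [hypCoeff]

-- No hypothesis on `c`: if `c + n = 0`, both sides are `0` by the convention `x / 0 = 0`.
theorem hypCoeff_succ (a b c : ℝ) (n : ℕ) :
    hypCoeff a b c (n + 1) = hypCoeff a b c n * ((a + n) * (b + n) / ((c + n) * (n + 1))) := by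
  simp only [hypCoeff, ascPochhammer_succ_eval, Nat.factorial_succ, Nat.cast_mul, Nat.cast_succ]
  rw [div_mul_div_comm]
  ring

theorem ascPochhammer_eval_add_one_mul {R : Type*} [CommSemiring R] (a : R) (n : ℕ) :
    (ascPochhammer R n).eval (a + 1) * a = (ascPochhammer R n).eval a * (a + n) := by
  rw [← ascPochhammer_succ_eval, ascPochhammer_succ_left, Polynomial.eval_mul,
    Polynomial.eval_comp]
  simp [mul_comm]

theorem hypCoeff_add_one_add_one {a c : ℝ} (b : ℝ) (ha : a ≠ 0) (hc : c ≠ 0) (n : ℕ) :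
    hypCoeff (a + 1) b (c + 1) n = hypCoeff a b c n * ((a + n) * c / (a * (c + n))) := by
  have hpa : (ascPochhammer ℝ n).eval (a + 1) = (ascPochhammer ℝ n).eval a * (a + n) / a := by
    rw [← ascPochhammer_eval_add_one_mul, mul_div_cancel_right₀ _ ha]
  have hpc : (ascPochhammer ℝ n).eval (c + 1) = (ascPochhammer ℝ n).eval c * (c + n) / c := by
    rw [← ascPochhammer_eval_add_one_mul, mul_div_cancel_right₀ _ hc]
  rw [hypCoeff, hypCoeff, hpa, hpc]
  simp only [div_eq_mul_inv, mul_inv, inv_inv]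
  ring

theorem ascPochhammer_div_factorial_eq_hypCoeff (a : ℝ) {b : ℝ} (hb : 0 < b) (n : ℕ) :
    (ascPochhammer ℝ n).eval a / n.factorial = hypCoeff a b (b + 1) n * ((b + n) / b) := by
  have hpb := (ascPochhammer_pos n b hb).ne'
  have hpb1 : (ascPochhammer ℝ n).eval (b + 1) = (ascPochhammer ℝ n).eval b * (b + n) / b := by
    rw [← ascPochhammer_eval_add_one_mul, mul_div_cancel_right₀ _ hb.ne']
  have hbn : b + n ≠ 0 := by positivity
  rw [hypCoeff, hpb1]
  field_simp

theorem mem_eball_zero_one {z : ℝ} (hz : |z| < 1) : z ∈ Metric.eball (0 : ℝ) 1 := by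
  rwa [Metric.mem_eball, edist_zero_right, ← ofReal_norm, ENNReal.ofReal_lt_one]

theorem hasSum_hypF {a b c z : ℝ} (habc : ∀ k : ℕ, (k : ℝ) ≠ -a ∧ (k : ℝ) ≠ -b ∧ (k : ℝ) ≠ -c)
    (hz : |z| < 1) : HasSum (fun n ↦ hypCoeff a b c n * z ^ n) (hypF a b c z) := by
  have hterm : (fun n ↦ hypCoeff a b c n * z ^ n) =
      fun n ↦ ordinaryHypergeometricSeries ℝ a b c n fun _ ↦ z := by
    ext n
    rw [ordinaryHypergeometricSeries_apply_eq, hypCoeff, smul_eq_mul]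
    ring
  rw [show hypF a b c z = ∑' n, hypCoeff a b c n * z ^ n from rfl, hterm]
  exact (ordinaryHypergeometricSeries ℝ a b c).hasSum
    (by rw [ordinaryHypergeometricSeries_radius_eq_one ℝ a b c habc]; exact mem_eball_zero_one hz)

theorem Ring.choose_add_natCast_sub_one (a : ℝ) (n : ℕ) :
    Ring.choose (a + n - 1) n = (ascPochhammer ℝ n).eval a / n.factorial := by
  rw [Ring.choose_eq_smul, Polynomial.descPochhammer_smeval_eq_ascPochhammer,
    Polynomial.ascPochhammer_smeval_eq_eval, show a + n - 1 - n + 1 = a by ring, smul_eq_mul,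
    inv_mul_eq_div]

theorem Real.hasSum_one_div_one_sub_rpow {a z : ℝ} (hz : |z| < 1) :
    HasSum (fun n ↦ (ascPochhammer ℝ n).eval a / n.factorial * z ^ n) (1 / (1 - z) ^ a) := by
  have h := (one_div_one_sub_rpow_hasFPowerSeriesOnBall_zero a).hasSum (mem_eball_zero_one hz)
  simpa only [FormalMultilinearSeries.ofScalars_apply_eq, zero_add, smul_eq_mul,
    Ring.choose_add_natCast_sub_one] using h

def shiftCoeff (k : ℕ) (c : ℕ → ℝ) (n : ℕ) : ℝ := if k ≤ n then c (n - k) else 0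

theorem HasSum.shiftCoeff_mul_pow {c : ℕ → ℝ} {z A : ℝ} (h : HasSum (fun n ↦ c n * z ^ n) A)
    (k : ℕ) : HasSum (fun n ↦ shiftCoeff k c n * z ^ n) (z ^ k * A) := by
  refine (hasSum_nat_add_iff' k).1 ?_
  have hinit : ∑ i ∈ Finset.range k, shiftCoeff k c i * z ^ i = 0 :=
    Finset.sum_eq_zero fun i hi ↦ by rw [shiftCoeff, if_neg (by simpa using hi), zero_mul]
  rw [hinit, sub_zero]
  simpa [shiftCoeff, pow_add, mul_comm, mul_left_comm] using h.mul_left (z ^ k)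

theorem HasSum.sum_shiftCoeff_mul_pow {c : ℕ → ℝ} {z A : ℝ} (h : HasSum (fun n ↦ c n * z ^ n) A)
    {d : ℕ} (p : Fin d → ℝ) :
    HasSum (fun n ↦ (∑ i, p i * shiftCoeff i c n) * z ^ n) ((∑ i, p i * z ^ (i : ℕ)) * A) := by
  simp_rw [Finset.sum_mul]
  exact hasSum_sum fun i _ ↦ by
    simpa only [mul_assoc] using (h.shiftCoeff_mul_pow i).mul_left (p i)

theorem combination_coeff_eq_zero (n : ℕ) :
    (∑ i, ![0, 10/7, -10/7, 10/7] i * shiftCoeff i (hypCoeff (8/3) (1/3) (10/3)) n)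
      + (∑ i, ![-4/3, 1/2, 1/2, -4/3] i * shiftCoeff i (hypCoeff (5/3) (1/3) (7/3)) n)
      + (∑ i, ![1, -2, 1] i * shiftCoeff i (hypCoeff (2/3) (1/3) (4/3)) n)
      + (∑ i, ![1/3, 0, -1/3] i *
          shiftCoeff i (fun m ↦ (ascPochhammer ℝ m).eval (2/3) / m.factorial) n) = 0 := by
  set u := hypCoeff (2/3) (1/3) (4/3)
  have hu₂ : hypCoeff (5/3) (1/3) (7/3) =
      fun m ↦ u m * ((2/3 + m) * (4/3) / (2/3 * (4/3 + m))) := by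
    ext m
    convert hypCoeff_add_one_add_one (1/3) (by norm_num : (2/3 : ℝ) ≠ 0)
      (by norm_num : (4/3 : ℝ) ≠ 0) m using 2 <;> norm_num
  have hu₃ : hypCoeff (8/3) (1/3) (10/3) =
      fun m ↦ hypCoeff (5/3) (1/3) (7/3) m * ((5/3 + m) * (7/3) / (5/3 * (7/3 + m))) := by
    ext m
    convert hypCoeff_add_one_add_one (1/3) (by norm_num : (5/3 : ℝ) ≠ 0)
      (by norm_num : (7/3 : ℝ) ≠ 0) m using 2 <;> norm_num
  have hs : (fun m ↦ (ascPochhammer ℝ m).eval (2/3) / m.factorial) =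
      fun m : ℕ ↦ u m * ((1/3 + m) / (1/3)) := by
    ext m
    convert ascPochhammer_div_factorial_eq_hypCoeff (2/3) (by norm_num : (0 : ℝ) < 1/3) m
      using 3
    norm_num
  have hu (m : ℕ) : u (m + 1) = u m * ((2/3 + m) * (1/3 + m) / ((4/3 + m) * (m + 1))) :=
    hypCoeff_succ _ _ _ m
  have hu₀ : u 0 = 1 := hypCoeff_zero _ _ _
  rw [hu₃, hu₂, hs]
  simp only [Fin.sum_univ_four, Fin.sum_univ_three, Matrix.cons_val, Fin.val_zero, Fin.val_one,
    Fin.val_two, show ((3 : Fin 4) : ℕ) = 3 from rfl, shiftCoeff]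
  rcases n with _ | _ | _ | k
  · norm_num [hu₀]
  · norm_num [hu, hu₀]
  · norm_num [hu, hu₀]
  · simp only [le_add_iff_nonneg_left, zero_le, ↓reduceIte, Nat.reduceSubDiff, hu, Nat.cast_add,
      Nat.cast_ofNat, Nat.cast_one]
    field_simp
    ring

theorem hypF_combination_eq {z : ℝ} (hz : |z| < 1) :
    10/7 * (z - z^2 + z^3) * hypF (8/3) (1/3) (10/3) z
      - 1/6 * (8 - 3*z - 3*z^2 + 8*z^3) * hypF (5/3) (1/3) (7/3) z
      + (1 - z)^2 * hypF (2/3) (1/3) (4/3) z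
      = -(1/3) * (1 + z) * (1 - z) ^ ((1 : ℝ) / 3) := by
  have hparams {a b c : ℝ} (ha : 0 < a) (hb : 0 < b) (hc : 0 < c) (k : ℕ) :
      (k : ℝ) ≠ -a ∧ (k : ℝ) ≠ -b ∧ (k : ℝ) ≠ -c := by
    refine ⟨?_, ?_, ?_⟩ <;> intro h <;> linarith [(k.cast_nonneg : (0 : ℝ) ≤ k)]
  have h₃ := (hasSum_hypF (hparams (a := 8/3) (b := 1/3) (c := 10/3) (by norm_num) (by norm_num)
    (by norm_num)) hz).sum_shiftCoeff_mul_pow ![0, 10/7, -10/7, 10/7]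
  have h₂ := (hasSum_hypF (hparams (a := 5/3) (b := 1/3) (c := 7/3) (by norm_num) (by norm_num)
    (by norm_num)) hz).sum_shiftCoeff_mul_pow ![-4/3, 1/2, 1/2, -4/3]
  have h₁ := (hasSum_hypF (hparams (a := 2/3) (b := 1/3) (c := 4/3) (by norm_num) (by norm_num)
    (by norm_num)) hz).sum_shiftCoeff_mul_pow ![1, -2, 1]
  have hs := (Real.hasSum_one_div_one_sub_rpow (a := 2/3) hz).sum_shiftCoeff_mul_pow
    ![1/3, 0, -1/3]
  have hsum := ((h₃.add h₂).add h₁).add hs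
  simp only [← add_mul, combination_coeff_eq_zero, zero_mul] at hsum
  have hzero := hsum.unique hasSum_zero
  simp only [Fin.sum_univ_four, Fin.sum_univ_three, Matrix.cons_val, Fin.val_zero, Fin.val_one,
    Fin.val_two, show ((3 : Fin 4) : ℕ) = 3 from rfl] at hzero
  have h1z : 0 < 1 - z := by linarith [le_abs_self z]
  have hrpow : (1 - z) ^ ((1 : ℝ) / 3) = (1 - z) * (1 / (1 - z) ^ ((2 : ℝ) / 3)) := by
    rw [mul_one_div, ← Real.rpow_one_sub' h1z.le (by norm_num)]
    norm_num
  rw [hrpow]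
  linear_combination hzero

theorem stmt17 (l : ℝ) (h1 : 1 < l) :
    (10 / 7) * (l ^ 2 - l + 1) * hypF (8 / 3) (1 / 3) (10 / 3) (1 / l)
      - (1 / 6) * (l + 1) * (8 * l ^ 2 - 11 * l + 8) * hypF (5 / 3) (1 / 3) (7 / 3) (1 / l)
      + l * (1 - l) ^ 2 * hypF (2 / 3) (1 / 3) (4 / 3) (1 / l)
      = -(1 / 3) * (l - 1) ^ ((1 : ℝ) / 3) * l ^ ((5 : ℝ) / 3) * (l + 1) := by
  have hl : 0 < l := by linarith
  have hz : |1 / l| < 1 := by rwa [abs_of_pos (by positivity), div_lt_one hl]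
  have hpow : (l - 1) ^ ((1 : ℝ) / 3) * l ^ ((5 : ℝ) / 3) =
      l ^ 2 * (1 - 1 / l) ^ ((1 : ℝ) / 3) := by
    have h1l : 0 ≤ 1 - 1 / l := by rw [sub_nonneg, div_le_one hl]; exact h1.le
    rw [show l - 1 = l * (1 - 1 / l) by field_simp, Real.mul_rpow hl.le h1l, mul_right_comm,
      ← Real.rpow_add hl]
    norm_num
  have key := hypF_combination_eq hz
  generalize hypF (8 / 3) (1 / 3) (10 / 3) (1 / l) = A₃ at key ⊢
  generalize hypF (5 / 3) (1 / 3) (7 / 3) (1 / l) = A₂ at key ⊢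
  generalize hypF (2 / 3) (1 / 3) (4 / 3) (1 / l) = A₁ at key ⊢
  generalize (1 - 1 / l) ^ ((1 : ℝ) / 3) = R at key hpow
  field_simp at key
  -- `field_simp` has cleared the denominator `3 · 6 · 7 = 126` of `key`.
  linear_combination key / 126 + (1 / 3) * (l + 1) * hpow
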